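/- Let (a_t) be positive with a_{t+1} ≥ a_t (1 - C η̃_t) where C > 0 and η̃_t ≥ 0 satisfies η̃_t ≤ 1/(4Ct) for all t ≥ t₀. Then t · a_t → ∞ as t → ∞; in particular a_t = ω(1/t). -/

import Mathlib

open Filter

/-!
Once `C η_t ≤ 1/(4t)`, the recursion gives `a_{t+1} ≥ a_t (1 - 1/(4t))`, and since
`(1 + 1/t)(1 - 1/(4t))² ≥ 1` the sequence `√t · a_t` is nondecreasing from `t₀` on.
Hence `√t · a_t ≥ c > 0` eventually, and `t · a_t ≥ c √t → ∞`.
-/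

lemma sqrt_le_sqrt_succ_mul_one_sub (t : ℕ) :
    √(t : ℝ) ≤ √((t : ℝ) + 1) * (1 - 1 / (4 * t)) := by
  rcases Nat.eq_zero_or_pos t with rfl | ht
  · simp
  have ht : (1 : ℝ) ≤ t := by exact_mod_cast ht
  have hfactor : 0 ≤ 1 - 1 / (4 * (t : ℝ)) := by
    rw [sub_nonneg, div_le_one (by positivity)]
    linarith
  rw [← Real.sqrt_sq hfactor, ← Real.sqrt_mul (by positivity)]
  apply Real.sqrt_le_sqrt
  have hsq : ((t : ℝ) + 1) * (1 - 1 / (4 * t)) ^ 2 - t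
      = (8 * t ^ 2 - 7 * t + 1) / (16 * t ^ 2) := by
    field_simp
    ring
  have hnum : 0 ≤ (8 * (t : ℝ) ^ 2 - 7 * t + 1) / (16 * t ^ 2) := by
    apply div_nonneg _ (by positivity)
    nlinarith
  linarith

lemma monotoneOn_sqrt_mul_of_mul_one_sub_le {a : ℕ → ℝ} {t₀ : ℕ} (ha : ∀ t, 0 ≤ a t)
    (hrec : ∀ t, t₀ ≤ t → a t * (1 - 1 / (4 * t)) ≤ a (t + 1)) :
    MonotoneOn (fun t : ℕ => √(t : ℝ) * a t) (Set.Ici t₀) := by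
  refine monotoneOn_nat_Ici_of_le_succ fun t ht => ?_
  calc √(t : ℝ) * a t
      ≤ √((t : ℝ) + 1) * (1 - 1 / (4 * t)) * a t :=
        mul_le_mul_of_nonneg_right (sqrt_le_sqrt_succ_mul_one_sub t) (ha t)
    _ = √((t : ℝ) + 1) * (a t * (1 - 1 / (4 * t))) := by ring
    _ ≤ √(((t + 1 : ℕ) : ℝ)) * a (t + 1) := by
        push_cast
        exact mul_le_mul_of_nonneg_left (hrec t ht) (Real.sqrt_nonneg _)

lemma tendsto_natCast_mul_atTop_of_monotoneOn_sqrt_mul {a : ℕ → ℝ} {t₀ : ℕ}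
    (ha : ∀ t, 0 < a t) (hmono : MonotoneOn (fun t : ℕ => √(t : ℝ) * a t) (Set.Ici t₀)) :
    Tendsto (fun t : ℕ => (t : ℝ) * a t) atTop atTop := by
  set s := max t₀ 1
  have hc : 0 < √(s : ℝ) * a s :=
    mul_pos (Real.sqrt_pos.mpr (by exact_mod_cast le_max_right t₀ 1)) (ha s)
  have hsqrt : Tendsto (fun t : ℕ => √(t : ℝ)) atTop atTop :=
    Real.tendsto_sqrt_atTop.comp tendsto_natCast_atTop_atTop
  refine tendsto_atTop_mono' atTop ?_ (hsqrt.atTop_mul_const hc)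
  filter_upwards [eventually_ge_atTop s] with t ht
  calc √(t : ℝ) * (√(s : ℝ) * a s)
      ≤ √(t : ℝ) * (√(t : ℝ) * a t) :=
        mul_le_mul_of_nonneg_left
          (hmono (le_max_left t₀ 1) ((le_max_left t₀ 1).trans ht) ht)
          (Real.sqrt_nonneg _)
    _ = t * a t := by rw [← mul_assoc, Real.mul_self_sqrt (Nat.cast_nonneg t)]

theorem weight_norm_lower_general (a η : ℕ → ℝ) (C : ℝ) (hC : 0 < C) (t₀ : ℕ)
    (hpos : ∀ t, 0 < a t)
    (hηsmall : ∀ t : ℕ, t₀ ≤ t → η t ≤ 1 / (4 * C * (t : ℝ)))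
    (hrec : ∀ t : ℕ, t₀ ≤ t → a t * (1 - C * η t) ≤ a (t + 1)) :
    Tendsto (fun t : ℕ => (t : ℝ) * a t) atTop atTop := by
  have hstep : ∀ t, t₀ ≤ t → a t * (1 - 1 / (4 * t)) ≤ a (t + 1) := by
    intro t ht
    have hCη : C * η t ≤ 1 / (4 * t) := by
      calc C * η t ≤ C * (1 / (4 * C * t)) := mul_le_mul_of_nonneg_left (hηsmall t ht) hC.le
        _ = 1 / (4 * t) := by field_simp
    exact (mul_le_mul_of_nonneg_left (by linarith) (hpos t).le).trans (hrec t ht)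
  exact tendsto_natCast_mul_atTop_of_monotoneOn_sqrt_mul hpos
    (monotoneOn_sqrt_mul_of_mul_one_sub_le (fun t => (hpos t).le) hstep)

/-- If a positive sequence satisfies `a (t+1) ≥ a t (1 - C η̃ t)` with
`0 ≤ η̃ t ≤ 1/(4Ct)` for `t ≥ t₀`, then `t · a t → ∞`, i.e. `a t = ω(1/t)`. -/
theorem weight_norm_lower (a η : ℕ → ℝ) (C : ℝ) (hC : 0 < C) (t₀ : ℕ)
    (ht₀ : 1 ≤ t₀) (hpos : ∀ t, 0 < a t) (hη : ∀ t, 0 ≤ η t)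
    (hηsmall : ∀ t : ℕ, t₀ ≤ t → η t ≤ 1 / (4 * C * (t : ℝ)))
    (hrec : ∀ t : ℕ, t₀ ≤ t → a t * (1 - C * η t) ≤ a (t + 1)) :
    Tendsto (fun t : ℕ => (t : ℝ) * a t) atTop atTop :=
  weight_norm_lower_general a η C hC t₀ hpos hηsmall hrec
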